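/- Let m ≥ 3 be an odd integer and n = 2m. Define s ∈ (ℤ_{4m})^n as the concatenation s = s¹s²s³ of the sequences s¹ = (1, 3, 5, …, 2m−3) of length m−1, s² = (2m+1, 2m+5, 2m+9, …, 4m−1) of length (m+1)/2, and s³ = (4m−3, 4m−7, 4m−11, …, 2m−1) of length (m+1)/2. Then the non-cyclic error ball E(n,2,1,0) splits ℤ_{4m} with splitting sequence s. -/

import Mathlib

/-- The non-cyclic error ball `E(n,b,k₊,k₋)`: vectors `e ∈ [−k₋,k₊]^n` (indices `0,…,n−1`
corresponding to coordinates `1,…,n`) such that for some `i`, all entries outside the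
window `[i, i+b−1]` vanish. -/
def nonCyclicBall (n b kp km : ℕ) : Set (Fin n → ℤ) :=
  {e | (∀ ℓ, -(km : ℤ) ≤ e ℓ ∧ e ℓ ≤ (kp : ℤ)) ∧
    ∃ i : Fin n, ∀ ℓ : Fin n, (ℓ.val < i.val ∨ i.val + b ≤ ℓ.val) → e ℓ = 0}

/-- The cyclic error ball `E°(n,b,k₊,k₋)`: vectors `e ∈ [−k₋,k₊]^n` such that for some
`i ∈ ℤ_n`, all entries outside the cyclic window `{i, i+1, …, i+b−1}` vanish. -/
def cyclicBall (n b kp km : ℕ) : Set (Fin n → ℤ) :=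
  {e | (∀ ℓ, -(km : ℤ) ≤ e ℓ ∧ e ℓ ≤ (kp : ℤ)) ∧
    ∃ i : ZMod n, ∀ ℓ : Fin n,
      (∀ j : ℕ, j < b → ((ℓ.val : ZMod n) ≠ i + (j : ZMod n))) → e ℓ = 0}
/-- The set `A ⊆ ℤ^n` splits the abelian group `G` with splitting sequence `s`
if the map `a ↦ Σ aᵢ sᵢ` is injective on `A`. -/
def Splits {n : ℕ} {G : Type*} [AddCommGroup G] (A : Set (Fin n → ℤ)) (s : Fin n → G) : Prop :=
  Set.InjOn (fun a => ∑ i, a i • s i) A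

/-! Every error of `E(2m,2,1,0)` is `0`, a unit vector `eₜ`, or `eₜ + eₜ₊₁`, with syndromes `0`,
`sₜ` and `sₜ + sₜ₊₁`. Lifting `sₜ` to its representative in `[0, 4m)`, the single syndromes are odd
and the adjacent ones even, which separates the two kinds since `4m` is even. Within each kind a
congruence modulo `4m` between numbers below `8m` is an equality up to adding `4m`, which leaves
finitely many linear cases in the three blocks of `s`. -/

open Function

section NonCyclicBall

variable {n : ℕ}

lemma eq_zero_or_single_or_adjacent_of_mem_nonCyclicBall {e : Fin n → ℤ}
    (he : e ∈ nonCyclicBall n 2 1 0) :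
    e = 0 ∨ (∃ t, e = Pi.single t 1) ∨
      ∃ t u : Fin n, u.val = t.val + 1 ∧ e = Pi.single t 1 + Pi.single u 1 := by
  obtain ⟨hbound, i, hwindow⟩ := he
  have hval : ∀ ℓ, e ℓ = 0 ∨ e ℓ = 1 := fun ℓ => by have := hbound ℓ; omega
  have hsupp : ∀ ℓ : Fin n, e ℓ = 1 → ℓ.val = i.val ∨ ℓ.val = i.val + 1 := fun ℓ hℓ => by
    by_contra h
    have := hwindow ℓ (by omega)
    omega
  by_cases hnext : ∃ j : Fin n, j.val = i.val + 1 ∧ e j = 1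
  · obtain ⟨j, hj, hej⟩ := hnext
    rcases hval i with hei | hei
    · right; left; refine ⟨j, funext fun ℓ => ?_⟩
      have := hval ℓ; have := hsupp ℓ
      simp only [Pi.single_apply, Fin.ext_iff]
      split_ifs <;> grind
    · right; right; refine ⟨i, j, hj, funext fun ℓ => ?_⟩
      have := hval ℓ; have := hsupp ℓ
      simp only [Pi.add_apply, Pi.single_apply, Fin.ext_iff]
      split_ifs <;> grind
  · push Not at hnext
    rcases hval i with hei | hei
    · left; funext ℓ
      have := hval ℓ; have := hsupp ℓ; have := hnext ℓ
      simp only [Pi.zero_apply]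
      grind
    · right; left; refine ⟨i, funext fun ℓ => ?_⟩
      have := hval ℓ; have := hsupp ℓ; have := hnext ℓ
      simp only [Pi.single_apply, Fin.ext_iff]
      split_ifs <;> grind

lemma splits_nonCyclicBall_two_one_zero {G : Type*} [AddCommGroup G] {s : Fin n → G}
    (h_inj : Injective s) (h_ne : ∀ t, s t ≠ 0)
    (h_adj_ne : ∀ t u : Fin n, u.val = t.val + 1 → s t + s u ≠ 0)
    (h_adj_inj : ∀ t u t' u' : Fin n, u.val = t.val + 1 → u'.val = t'.val + 1 →
      s t + s u = s t' + s u' → t = t')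
    (h_ne_adj : ∀ v t u : Fin n, u.val = t.val + 1 → s v ≠ s t + s u) :
    Splits (nonCyclicBall n 2 1 0) s := by
  intro a ha b hb hab
  simp only at hab
  rcases eq_zero_or_single_or_adjacent_of_mem_nonCyclicBall ha
      with rfl | ⟨v, rfl⟩ | ⟨t, u, hu, rfl⟩ <;>
    rcases eq_zero_or_single_or_adjacent_of_mem_nonCyclicBall hb
      with rfl | ⟨v', rfl⟩ | ⟨t', u', hu', rfl⟩ <;>
    simp only [Pi.add_apply, add_smul, Finset.sum_add_distrib, Fintype.sum_single_smul, one_smul,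
      Pi.zero_apply, zero_smul, Finset.sum_const_zero] at hab
  · rfl
  · exact absurd hab.symm (h_ne v')
  · exact absurd hab.symm (h_adj_ne t' u' hu')
  · exact absurd hab (h_ne v)
  · rw [h_inj hab]
  · exact absurd hab (h_ne_adj v t' u' hu')
  · exact absurd hab (h_adj_ne t u hu)
  · exact absurd hab.symm (h_ne_adj v' t u hu)
  · obtain rfl := h_adj_inj t u t' u' hu hu' hab
    obtain rfl : u = u' := Fin.ext (hu.trans hu'.symm)
    rfl

end NonCyclicBall

lemma Nat.ModEq.eq_or_eq_add_of_lt_two_mul {k a b : ℕ} (h : a ≡ b [MOD k]) (ha : a < 2 * k)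
    (hb : b < 2 * k) : a = b ∨ a = b + k ∨ b = a + k := by
  wlog hab : a ≤ b generalizing a b
  · rcases this h.symm hb ha (by omega) with h' | h' | h' <;> omega
  obtain ⟨q, hq⟩ := (Nat.modEq_iff_dvd' hab).1 h
  have hq2 : q < 2 := Nat.lt_of_mul_lt_mul_left (a := k) (by omega)
  interval_cases q <;> omega

def seqRep (m t : ℕ) : ℕ :=
  if t < m - 1 then 2 * t + 1
  else if t < m - 1 + (m + 1) / 2 then 2 * m + 1 + 4 * (t - (m - 1))
  else 4 * m - 3 - 4 * (t - (m - 1) - (m + 1) / 2)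

section SeqRep

variable {m t u v : ℕ}

lemma seqRep_lt (ht : t < 2 * m) : seqRep m t < 4 * m := by
  unfold seqRep; split_ifs <;> omega

lemma seqRep_mod_two (hmo : Odd m) (ht : t < 2 * m) : seqRep m t % 2 = 1 := by
  have := Nat.odd_iff.mp hmo
  unfold seqRep; split_ifs <;> omega

lemma eq_of_seqRep_modEq (hmo : Odd m) (ht : t < 2 * m) (hu : u < 2 * m)
    (h : seqRep m t ≡ seqRep m u [MOD 4 * m]) : t = u := by
  have heq := h.eq_of_lt_of_lt (seqRep_lt ht) (seqRep_lt hu)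
  have := Nat.odd_iff.mp hmo
  unfold seqRep at heq; split_ifs at heq <;> omega

lemma seqRep_add_seqRep_lt (ht : t + 1 < 2 * m) :
    seqRep m t + seqRep m (t + 1) < 2 * (4 * m) := by
  have := seqRep_lt (m := m) (t := t) (by omega)
  have := seqRep_lt ht
  omega

lemma not_seqRep_modEq_zero (hmo : Odd m) (ht : t < 2 * m) : ¬ seqRep m t ≡ 0 [MOD 4 * m] := by
  intro h
  have := h.eq_of_lt_of_lt (seqRep_lt ht) (by omega)
  have := seqRep_mod_two hmo ht
  omega

lemma not_seqRep_add_seqRep_modEq_zero (hm : 3 ≤ m) (hmo : Odd m) (ht : t + 1 < 2 * m) :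
    ¬ seqRep m t + seqRep m (t + 1) ≡ 0 [MOD 4 * m] := by
  intro h
  have := Nat.odd_iff.mp hmo
  rcases h.eq_or_eq_add_of_lt_two_mul (seqRep_add_seqRep_lt ht) (by omega) with hc | hc | hc <;>
    unfold seqRep at hc <;> split_ifs at hc <;> omega

lemma eq_of_seqRep_add_seqRep_modEq (hmo : Odd m) (ht : t + 1 < 2 * m)
    (hu : u + 1 < 2 * m)
    (h : seqRep m t + seqRep m (t + 1) ≡ seqRep m u + seqRep m (u + 1) [MOD 4 * m]) : t = u := by
  have := Nat.odd_iff.mp hmo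
  rcases h.eq_or_eq_add_of_lt_two_mul (seqRep_add_seqRep_lt ht) (seqRep_add_seqRep_lt hu)
    with hc | hc | hc <;> unfold seqRep at hc <;> split_ifs at hc <;> omega

lemma not_seqRep_modEq_seqRep_add_seqRep (hmo : Odd m) (hv : v < 2 * m) (ht : t + 1 < 2 * m) :
    ¬ seqRep m v ≡ seqRep m t + seqRep m (t + 1) [MOD 4 * m] := by
  intro h
  have := h.eq_or_eq_add_of_lt_two_mul (by have := seqRep_lt hv; omega) (seqRep_add_seqRep_lt ht)
  have := seqRep_mod_two hmo hv
  have := seqRep_mod_two hmo ht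
  have := seqRep_mod_two hmo (t := t) (by omega)
  omega

end SeqRep

/-- Case 4 of Theorem: for odd `m ≥ 3` and `n = 2m`, the concatenation of
`s¹ = (1,3,…,2m−3)` (length `m−1`), `s² = (2m+1,2m+5,…,4m−1)` (length `(m+1)/2`) and
`s³ = (4m−3,4m−7,…,2m−1)` (length `(m+1)/2`) splits `ℤ_{4m}` by the non-cyclic error ball
`E(n,2,1,0)`. -/
theorem stmt6 (m : ℕ) (hm : 3 ≤ m) (hmo : Odd m) :
    Splits (nonCyclicBall (2 * m) 2 1 0)
      (fun t : Fin (2 * m) =>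
        if t.val < m - 1 then ((2 * t.val + 1 : ℕ) : ZMod (4 * m))
        else if t.val < m - 1 + (m + 1) / 2 then
          ((2 * m + 1 + 4 * (t.val - (m - 1)) : ℕ) : ZMod (4 * m))
        else ((4 * m - 3 - 4 * (t.val - (m - 1) - (m + 1) / 2) : ℕ) : ZMod (4 * m))) := by
  have hsplit : Splits (nonCyclicBall (2 * m) 2 1 0)
      (fun t : Fin (2 * m) => (seqRep m t : ZMod (4 * m))) := by
    refine splits_nonCyclicBall_two_one_zero ?_ ?_ ?_ ?_ ?_ <;>
      simp only [Injective, ← Nat.cast_zero (R := ZMod (4 * m)), ← Nat.cast_add, Ne,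
        ZMod.natCast_eq_natCast_iff]
    · exact fun t u h => Fin.ext (eq_of_seqRep_modEq hmo t.isLt u.isLt h)
    · exact fun t => not_seqRep_modEq_zero hmo t.isLt
    · rintro t u hu
      rw [hu]
      exact not_seqRep_add_seqRep_modEq_zero hm hmo (hu ▸ u.isLt)
    · rintro t u t' u' hu hu' h
      rw [hu, hu'] at h
      exact Fin.ext (eq_of_seqRep_add_seqRep_modEq hmo (hu ▸ u.isLt) (hu' ▸ u'.isLt) h)
    · rintro v t u hu
      rw [hu]
      exact not_seqRep_modEq_seqRep_add_seqRep hmo v.isLt (hu ▸ u.isLt)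
  simpa only [seqRep, Nat.cast_ite] using hsplit
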